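/- arXiv:2007.03631 — 3 statements merged into one kernel-verified Lean document; each statement's English description precedes it below -/
import Mathlib

section
/- Let G be the Gaussian distribution on ℝ^{2N} given by (x, H_N x) with x ∼ N(0, ε·I_N), where H_N is the normalized Hadamard matrix. For subsets S, T ⊆ [N] with |S| ≠ |T|, the moment E_{(x,y)∼G}[∏_{i∈S} x_i ∏_{j∈T} y_j] equals 0. -/
/-!
Write `y = H x` as linear forms `Y_j = ∑_b H_{jb} X_b` and view the moment as the Gaussian
expectation of the polynomial `∏_{i∈S} X_i ∏_{j∈T} Y_j`. Gaussian integration by parts,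
`E[x_c p(x)] = ε E[∂_c p(x)]`, summed along row `j₀` of `H` gives `E[Y_{j₀} p] = ε E[D p]`
for the directional derivative `D` along that row. As distinct rows of `H` are orthogonal,
`D Y_j = 0` for `j ≠ j₀`, so `D` only hits the `X_i`, `i ∈ S`: each step removes one element
from each of `S` and `T`, keeping `|S| ≠ |T|`, until `S` is empty (and the sum over `S` with it)
or `T` is empty. In the latter case `E[∏_{i∈S} X_i] = ε E[∂_c ∏_{i∈S∖c} X_i] = 0` for any
`c ∈ S`, since the `X_i` are distinct.
-/

open MeasureTheory ProbabilityTheory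
open scoped NNReal ENNReal

/-- Entry `(a,b)` of the `N × N` normalized Hadamard matrix, `N = 2^n`. -/
noncomputable def hadamardEntry {n : ℕ} (a b : Fin n → Bool) : ℝ :=
  (-1 : ℝ) ^ (Finset.univ.filter fun t => a t ∧ b t).card / Real.sqrt (2 ^ n)

namespace ProbabilityTheory

lemma integrable_pow_gaussianReal (μ : ℝ) (v : ℝ≥0) (k : ℕ) :
    Integrable (fun x : ℝ => x ^ k) (gaussianReal μ v) :=
  integrable_pow_of_integrable_exp_mul (X := id) one_ne_zero
    (integrable_exp_mul_gaussianReal 1) (integrable_exp_mul_gaussianReal (-1)) k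

lemma integrable_gaussianPDFReal_mul_pow (μ : ℝ) {v : ℝ≥0} (hv : v ≠ 0) (k : ℕ) :
    Integrable fun x : ℝ => gaussianPDFReal μ v x * x ^ k := by
  have h := integrable_pow_gaussianReal μ v k
  rw [gaussianReal_of_var_ne_zero μ hv, integrable_withDensity_iff_integrable_smul'
    (measurable_gaussianPDF μ v) (ae_of_all _ fun _ => gaussianPDF_lt_top)] at h
  simpa [toReal_gaussianPDF] using h

lemma hasDerivAt_gaussianPDFReal (μ : ℝ) (v : ℝ≥0) (x : ℝ) :
    HasDerivAt (gaussianPDFReal μ v) (-((x - μ) / v) * gaussianPDFReal μ v x) x := by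
  have hfun : gaussianPDFReal μ v =
      fun y => (Real.sqrt (2 * Real.pi * v))⁻¹ * Real.exp (-(2 * v : ℝ)⁻¹ * (y - μ) ^ 2) := by
    ext y
    rw [gaussianPDFReal]
    ring_nf
  rw [hfun]
  refine ((((hasDerivAt_id' x).sub_const μ).fun_pow 2).const_mul _
    |>.exp.const_mul _).congr_deriv ?_
  rcases eq_or_ne (v : ℝ) 0 with hv | hv
  · simp [hv]
  · field_simp
    ring

/-- `k - 1` is truncated subtraction; at `k = 0` both sides vanish. -/
lemma integral_pow_succ_gaussianReal (v : ℝ≥0) (k : ℕ) :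
    ∫ x, x ^ (k + 1) ∂gaussianReal 0 v = v * k * ∫ x, x ^ (k - 1) ∂gaussianReal 0 v := by
  rcases eq_or_ne v 0 with rfl | hv
  · simp [gaussianReal_zero_var]
  have hv' : (v : ℝ) ≠ 0 := by exact_mod_cast hv
  have hint := integrable_gaussianPDFReal_mul_pow 0 hv
  simp only [integral_gaussianReal_eq_integral_smul hv, smul_eq_mul]
  have ibp := integral_mul_deriv_eq_deriv_mul_of_integrable
    (u := fun x : ℝ => x ^ k) (u' := fun x => k * x ^ (k - 1))
    (v := gaussianPDFReal 0 v) (v' := fun x => -((x - 0) / v) * gaussianPDFReal 0 v x)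
    (fun x _ => hasDerivAt_pow k x) (fun x _ => hasDerivAt_gaussianPDFReal 0 v x)
    (((hint (k + 1)).const_mul (-v⁻¹)).congr (ae_of_all _ fun x => by simp; ring))
    (((hint (k - 1)).const_mul k).congr (ae_of_all _ fun x => by simp; ring))
    ((hint k).congr (ae_of_all _ fun x => by simp; ring))
  rw [show (fun x : ℝ => x ^ k * (-((x - 0) / v) * gaussianPDFReal 0 v x))
      = fun x => -(v : ℝ)⁻¹ * (gaussianPDFReal 0 v x * x ^ (k + 1)) by ext; ring,
    show (fun x : ℝ => k * x ^ (k - 1) * gaussianPDFReal 0 v x)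
      = fun x => (k : ℝ) * (gaussianPDFReal 0 v x * x ^ (k - 1)) by ext; ring,
    integral_const_mul, integral_const_mul] at ibp
  field_simp at ibp
  linarith

end ProbabilityTheory

theorem Derivation.leibniz_finset_prod {R A M κ : Type*} [CommSemiring R] [CommSemiring A]
    [AddCommMonoid M] [Algebra R A] [Module A M] [Module R M] [DecidableEq κ]
    (D : Derivation R A M) (s : Finset κ) (f : κ → A) :
    D (∏ i ∈ s, f i) = ∑ i ∈ s, (∏ j ∈ s.erase i, f j) • D (f i) := by
  induction s using Finset.induction_on with
  | empty => simp
  | insert a s ha ih =>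
    have herase : ∀ i ∈ s, (insert a s).erase i = insert a (s.erase i) := fun i hi =>
      Finset.erase_insert_of_ne fun h => ha (h ▸ hi)
    rw [Finset.prod_insert ha, D.leibniz, ih, Finset.sum_insert ha, Finset.erase_insert ha,
      Finset.smul_sum, add_comm]
    congr 1
    refine Finset.sum_congr rfl fun i hi => ?_
    rw [herase i hi, Finset.prod_insert fun h => ha (Finset.mem_of_mem_erase h), smul_smul]

namespace MvPolynomial

variable {ι R : Type*} [Fintype ι] [CommSemiring R]

noncomputable def linearForm (w : ι → R) : MvPolynomial ι R := ∑ i, w i • X i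

noncomputable def directionalDeriv (w : ι → R) :
    Derivation R (MvPolynomial ι R) (MvPolynomial ι R) :=
  ∑ i, w i • pderiv i

@[simp]
lemma eval_linearForm (w x : ι → R) : eval x (linearForm w) = ∑ i, w i * x i := by
  simp [linearForm, smul_eval]

lemma directionalDeriv_apply (w : ι → R) (p : MvPolynomial ι R) :
    directionalDeriv w p = ∑ i, w i • pderiv i p := by
  rw [directionalDeriv, ← Derivation.coeFnAddMonoidHom_apply, map_sum, Finset.sum_apply]
  rfl

lemma directionalDeriv_X (w : ι → R) (c : ι) : directionalDeriv w (X c) = C (w c) := by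
  classical
  simp [directionalDeriv_apply, pderiv_X, Pi.single_apply, smul_eq_C_mul]

lemma directionalDeriv_linearForm (w u : ι → R) :
    directionalDeriv w (linearForm u) = C (∑ i, w i * u i) := by
  simp [linearForm, directionalDeriv_X, smul_eq_C_mul, mul_comm]

lemma directionalDeriv_prod_X [DecidableEq ι] (w : ι → R) (S : Finset ι) :
    directionalDeriv w (∏ i ∈ S, X i) = ∑ c ∈ S, w c • ∏ i ∈ S.erase c, X i := by
  simp [Derivation.leibniz_finset_prod, directionalDeriv_X, smul_eq_C_mul, mul_comm]

lemma directionalDeriv_prod_linearForm_eq_zero {κ : Type*} (w : ι → R) (A : κ → ι → R)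
    (T : Finset κ) (hT : ∀ j ∈ T, ∑ i, w i * A j i = 0) :
    directionalDeriv w (∏ j ∈ T, linearForm (A j)) = 0 := by
  classical
  rw [Derivation.leibniz_finset_prod]
  exact Finset.sum_eq_zero fun j hj => by simp [directionalDeriv_linearForm, hT j hj]

lemma integrable_eval_gaussianReal_pi (ε : ℝ≥0) (p : MvPolynomial ι ℝ) :
    Integrable (fun x => eval x p) (Measure.pi fun _ : ι => gaussianReal 0 ε) := by
  induction p using MvPolynomial.induction_on' with
  | monomial s a =>
    simp only [eval_monomial, Finsupp.prod_fintype _ _ fun _ => pow_zero _]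
    exact (Integrable.fintype_prod fun i => integrable_pow_gaussianReal 0 ε (s i)).const_mul a
  | add p q hp hq =>
    simp only [map_add]
    exact hp.add hq

variable (ι) in
noncomputable def gaussianExpectation (ε : ℝ≥0) : MvPolynomial ι ℝ →ₗ[ℝ] ℝ where
  toFun p := ∫ x, eval x p ∂(Measure.pi fun _ : ι => gaussianReal 0 ε)
  map_add' p q := by
    simpa using integral_add (integrable_eval_gaussianReal_pi ε p)
      (integrable_eval_gaussianReal_pi ε q)
  map_smul' a p := by simpa [smul_eval] using integral_const_mul a _

lemma gaussianExpectation_apply (ε : ℝ≥0) (p : MvPolynomial ι ℝ) :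
    gaussianExpectation ι ε p = ∫ x, eval x p ∂(Measure.pi fun _ : ι => gaussianReal 0 ε) :=
  rfl

lemma gaussianExpectation_monomial (ε : ℝ≥0) (s : ι →₀ ℕ) (a : ℝ) :
    gaussianExpectation ι ε (monomial s a) = a * ∏ i, ∫ t, t ^ s i ∂gaussianReal 0 ε := by
  simp only [gaussianExpectation_apply, eval_monomial,
    Finsupp.prod_fintype _ _ fun _ => pow_zero _, integral_const_mul]
  rw [integral_fintype_prod_eq_prod (f := fun i t => t ^ s i)]

theorem gaussianExpectation_X_mul (ε : ℝ≥0) (c : ι) (p : MvPolynomial ι ℝ) :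
    gaussianExpectation ι ε (X c * p) = ε * gaussianExpectation ι ε (pderiv c p) := by
  classical
  induction p using MvPolynomial.induction_on' with
  | monomial s a =>
    have hrest : ∀ i ∈ ({c}ᶜ : Finset ι),
        ∫ t, t ^ (Finsupp.single c 1 + s : ι →₀ ℕ) i ∂gaussianReal 0 ε
          = ∫ t, t ^ (s - Finsupp.single c 1 : ι →₀ ℕ) i ∂gaussianReal 0 ε := fun i hi => by
      have hic : i ≠ c := fun h => by simp [h] at hi
      simp [Finsupp.single_eq_of_ne hic]
    rw [X, monomial_mul, one_mul, pderiv_monomial, gaussianExpectation_monomial,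
      gaussianExpectation_monomial, Fintype.prod_eq_mul_prod_compl c,
      Fintype.prod_eq_mul_prod_compl c, Finset.prod_congr rfl hrest]
    simp only [Finsupp.add_apply, Finsupp.tsub_apply, Finsupp.single_eq_same, add_comm 1,
      integral_pow_succ_gaussianReal]
    ring
  | add p q hp hq => simp only [mul_add, map_add, hp, hq]

theorem gaussianExpectation_linearForm_mul (ε : ℝ≥0) (w : ι → ℝ) (p : MvPolynomial ι ℝ) :
    gaussianExpectation ι ε (linearForm w * p)
      = ε * gaussianExpectation ι ε (directionalDeriv w p) := by
  simp only [linearForm, directionalDeriv_apply, Finset.sum_mul, smul_mul_assoc, map_sum,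
    map_smul, gaussianExpectation_X_mul, Finset.mul_sum, smul_eq_mul]
  exact Finset.sum_congr rfl fun i _ => by ring

theorem gaussianExpectation_prod_X_mul_prod_linearForm_eq_zero {κ : Type*} (ε : ℝ≥0)
    (A : κ → ι → ℝ) (hA : Pairwise fun j j' => ∑ i, A j i * A j' i = 0)
    {S : Finset ι} {T : Finset κ} (hST : S.card ≠ T.card) :
    gaussianExpectation ι ε ((∏ i ∈ S, X i) * ∏ j ∈ T, linearForm (A j)) = 0 := by
  classical
  induction T using Finset.induction_on generalizing S with
  | empty =>
    obtain ⟨c, hc⟩ : S.Nonempty := Finset.card_pos.1 (Nat.pos_of_ne_zero (by simpa using hST))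
    have hderiv : pderiv c (∏ i ∈ S.erase c, X i : MvPolynomial ι ℝ) = 0 := by
      rw [Derivation.leibniz_finset_prod]
      exact Finset.sum_eq_zero fun i hi => by
        rw [pderiv_X_of_ne (Finset.ne_of_mem_erase hi), smul_zero]
    rw [Finset.prod_empty, mul_one, ← Finset.mul_prod_erase S X hc, gaussianExpectation_X_mul,
      hderiv, map_zero, mul_zero]
  | insert j₀ T hj₀ ih =>
    have horth : ∀ j ∈ T, ∑ i, A j₀ i * A j i = 0 := fun j hj => hA fun h => hj₀ (h ▸ hj)
    have hcard : ∀ c ∈ S, (S.erase c).card ≠ T.card := fun c hc => by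
      have := Finset.card_pos.2 ⟨c, hc⟩
      rw [Finset.card_insert_of_notMem hj₀] at hST
      rw [Finset.card_erase_of_mem hc]
      omega
    rw [Finset.prod_insert hj₀, mul_left_comm, gaussianExpectation_linearForm_mul,
      Derivation.leibniz, directionalDeriv_prod_linearForm_eq_zero _ _ _ horth,
      directionalDeriv_prod_X, smul_zero, zero_add, Finset.smul_sum, map_sum,
      Finset.sum_eq_zero, mul_zero]
    intro c hc
    rw [smul_comm, map_smul, smul_eq_mul, smul_eq_mul, mul_comm (∏ j ∈ T, _), ih (hcard c hc),
      mul_zero]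

end MvPolynomial

lemma pairwise_sum_hadamardEntry_mul_eq_zero {n : ℕ} :
    Pairwise fun j j' : Fin n → Bool => ∑ b, hadamardEntry j b * hadamardEntry j' b = 0 := by
  intro j j' hjj'
  obtain ⟨t₀, ht₀⟩ := Function.ne_iff.mp hjj'
  have hsign : ∀ a b : Fin n → Bool, (-1 : ℝ) ^ (Finset.univ.filter fun t => a t ∧ b t).card
      = ∏ t, if a t ∧ b t then -1 else 1 := fun a b => by
    rw [← Finset.prod_filter, Finset.prod_const]
  -- the character sum factorizes over coordinates, and the factor at `t₀` is `1 + (-1)`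
  have hsum : ∑ b : Fin n → Bool,
      ∏ t, (if j t ∧ b t then (-1 : ℝ) else 1) * (if j' t ∧ b t then -1 else 1) = 0 := by
    rw [← Fintype.prod_sum fun t (β : Bool) =>
      (if j t ∧ β then (-1 : ℝ) else 1) * (if j' t ∧ β then -1 else 1)]
    refine Finset.prod_eq_zero (Finset.mem_univ t₀) ?_
    cases h : j t₀ <;> cases h' : j' t₀ <;> simp_all
  simp only [hadamardEntry, div_mul_div_comm, ← Finset.sum_div, hsign, ← Finset.prod_mul_distrib,
    hsum, zero_div]

/-- For the Gaussian distribution `G` of `(x, H_N x)` with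
`x ∼ N(0, ε·I_N)`, and subsets `S, T ⊆ [N]` with `|S| ≠ |T|`, the moment
`E[∏_{i∈S} x_i ∏_{j∈T} y_j]` vanishes. -/
theorem gaussian_forrelation_moment_ne_card_eq_zero
    {n : ℕ} (ε : ℝ≥0) (S T : Finset (Fin n → Bool)) (hST : S.card ≠ T.card) :
    (∫ x, (∏ i ∈ S, x i) *
        ∏ j ∈ T, (∑ b : Fin n → Bool, hadamardEntry j b * x b)
        ∂(Measure.pi fun _ : Fin n → Bool => gaussianReal 0 ε))
      = 0 := by
  have h := MvPolynomial.gaussianExpectation_prod_X_mul_prod_linearForm_eq_zero ε hadamardEntry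
    pairwise_sum_hadamardEntry_mul_eq_zero hST
  simpa [MvPolynomial.gaussianExpectation_apply] using h
end

section
/- Let P, Q be probability distributions on ℝ^{2N} and for S ⊆ [k] let P^S Q^{S̄} denote the product distribution on (ℝ^{2N})^k whose j-th block is P if j ∈ S and Q otherwise. Define μ₀ = 2^{-(k-1)} ∑_{|S| even} P^S Q^{S̄} and μ₁ = 2^{-(k-1)} ∑_{|S| odd} P^S Q^{S̄}. Then for any moment index I = (I₁,…,I_k) with each I_j ⊆ [2N], μ̂₀(I) − μ̂₁(I) = 2^{-(k-1)} ∏_{j=1}^k (Q̂(I_j) − P̂(I_j)). -/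
/-!
Expanding `∏ j (Q̂(I_j) − P̂(I_j))` over subsets gives `∑_S (−1)^|S| ∏_{j∈S} P̂(I_j) ∏_{j∉S} Q̂(I_j)`,
and each summand is, up to sign, the moment of `P^S Q^{S̄}` because moments of product measures
factor. Splitting the sum by the parity of `|S|` gives `2^{k-1} (μ̂₀(I) − μ̂₁(I))`.
-/

open MeasureTheory ProbabilityTheory
open scoped NNReal ENNReal

/-- The moment `D̂(I) = E_{z∼D}[∏_{i∈I} z_i]` of a distribution on `ℝ^M`. -/
noncomputable def mom {M : ℕ} (D : Measure (Fin M → ℝ)) (I : Finset (Fin M)) : ℝ :=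
  ∫ z, ∏ i ∈ I, z i ∂D

/-- The moment of a distribution on `(ℝ^M)^k` indexed by a block index
`I = (I₁,…,I_k)`. -/
noncomputable def blockMom {M k : ℕ} (D : Measure (Fin k → Fin M → ℝ))
    (I : Fin k → Finset (Fin M)) : ℝ :=
  ∫ z, ∏ j, ∏ i ∈ I j, z j i ∂D

/-- The product distribution `P^S Q^{S̄}` whose `j`-th block is `P` for `j ∈ S`
and `Q` otherwise. -/
noncomputable def prodDist {M k : ℕ} (P Q : Measure (Fin M → ℝ))
    (S : Finset (Fin k)) : Measure (Fin k → Fin M → ℝ) :=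
  Measure.pi fun j => if j ∈ S then P else Q

theorem Finset.prod_sub_eq_sum_even_sub_sum_odd {ι R : Type*} [Fintype ι] [DecidableEq ι]
    [CommRing R] (f g : ι → R) :
    ∏ i, (f i - g i)
      = ∑ t with Even t.card, (∏ i ∈ t, g i) * ∏ i ∈ tᶜ, f i
        - ∑ t with Odd t.card, (∏ i ∈ t, g i) * ∏ i ∈ tᶜ, f i := by
  rw [Finset.prod_sub, Finset.powerset_univ,
    ← Finset.sum_filter_add_sum_filter_not _ (fun t => Even t.card)]
  simp only [Nat.not_even_iff_odd, sub_eq_add_neg, ← Finset.sum_neg_distrib,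
    Finset.compl_eq_univ_sdiff]
  congr 1 <;> refine Finset.sum_congr rfl fun t ht => ?_ <;>
    rw [(Finset.mem_filter.1 ht).2.neg_one_pow] <;> ring

lemma blockMom_prodDist {M k : ℕ} (P Q : Measure (Fin M → ℝ)) [SigmaFinite P] [SigmaFinite Q]
    (S : Finset (Fin k)) (I : Fin k → Finset (Fin M)) :
    blockMom (prodDist P Q S) I = (∏ j ∈ S, mom P (I j)) * ∏ j ∈ Sᶜ, mom Q (I j) := by
  have (j : Fin k) : SigmaFinite (if j ∈ S then P else Q) := by
    split_ifs <;> infer_instance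
  rw [blockMom, prodDist, integral_fintype_prod_eq_prod (E := fun _ => Fin M → ℝ)
    (fun j z => ∏ i ∈ I j, z i), ← Finset.prod_mul_prod_compl S]
  congr 1 <;> refine Finset.prod_congr rfl fun j hj => ?_
  · rw [if_pos hj, mom]
  · rw [if_neg (Finset.mem_compl.1 hj), mom]

lemma blockMom_smul_sum {M k : ℕ} {ι : Type*} (c : ℝ≥0∞) (s : Finset ι)
    (μ : ι → Measure (Fin k → Fin M → ℝ)) (I : Fin k → Finset (Fin M))
    (hμ : ∀ i ∈ s, Integrable (fun z : Fin k → Fin M → ℝ => ∏ j, ∏ i ∈ I j, z j i) (μ i)) :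
    blockMom (c • ∑ i ∈ s, μ i) I = c.toReal * ∑ i ∈ s, blockMom (μ i) I := by
  rw [blockMom, integral_smul_measure, integral_finsetSum_measure hμ, smul_eq_mul]
  rfl

theorem parity_mixture_moment_difference_general
    {N k : ℕ}
    (P Q : Measure (Fin (2 * N) → ℝ))
    [IsProbabilityMeasure P] [IsProbabilityMeasure Q]
    (hint : ∀ (S : Finset (Fin k)) (I : Fin k → Finset (Fin (2 * N))),
      Integrable (fun z : Fin k → Fin (2 * N) → ℝ => ∏ j, ∏ i ∈ I j, z j i)
        (prodDist P Q S))
    (I : Fin k → Finset (Fin (2 * N))) :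
    blockMom (((2 : ℝ≥0∞) ^ (k - 1))⁻¹ •
        ∑ S ∈ Finset.univ.filter (fun S : Finset (Fin k) => Even S.card),
          prodDist P Q S) I
      - blockMom (((2 : ℝ≥0∞) ^ (k - 1))⁻¹ •
          ∑ S ∈ Finset.univ.filter (fun S : Finset (Fin k) => Odd S.card),
            prodDist P Q S) I
      = (1 / 2 ^ (k - 1) : ℝ) * ∏ j, (mom Q (I j) - mom P (I j)) := by
  have hc : (((2 : ℝ≥0∞) ^ (k - 1))⁻¹).toReal = 1 / 2 ^ (k - 1) := by
    simp [ENNReal.toReal_inv]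
  rw [blockMom_smul_sum _ _ _ _ fun S _ => hint S I, blockMom_smul_sum _ _ _ _ fun S _ => hint S I,
    hc, ← mul_sub, Finset.prod_sub_eq_sum_even_sub_sum_odd (fun j => mom Q (I j))]
  simp only [blockMom_prodDist]

/-- With `μ₀ = 2^{-(k-1)} ∑_{|S| even} P^S Q^{S̄}` and
`μ₁ = 2^{-(k-1)} ∑_{|S| odd} P^S Q^{S̄}`, for any moment index `I = (I₁,…,I_k)`:
`μ̂₀(I) − μ̂₁(I) = 2^{-(k-1)} ∏_j (Q̂(I_j) − P̂(I_j))`. -/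
theorem parity_mixture_moment_difference
    {N k : ℕ} (hk : 1 ≤ k)
    (P Q : Measure (Fin (2 * N) → ℝ))
    [IsProbabilityMeasure P] [IsProbabilityMeasure Q]
    (hint : ∀ (S : Finset (Fin k)) (I : Fin k → Finset (Fin (2 * N))),
      Integrable (fun z : Fin k → Fin (2 * N) → ℝ => ∏ j, ∏ i ∈ I j, z j i)
        (prodDist P Q S))
    (I : Fin k → Finset (Fin (2 * N))) :
    blockMom (((2 : ℝ≥0∞) ^ (k - 1))⁻¹ •
        ∑ S ∈ Finset.univ.filter (fun S : Finset (Fin k) => Even S.card),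
          prodDist P Q S) I
      - blockMom (((2 : ℝ≥0∞) ^ (k - 1))⁻¹ •
          ∑ S ∈ Finset.univ.filter (fun S : Finset (Fin k) => Odd S.card),
            prodDist P Q S) I
      = (1 / 2 ^ (k - 1) : ℝ) * ∏ j, (mom Q (I j) - mom P (I j)) :=
  parity_mixture_moment_difference_general P Q hint I
end

section
/- Let H : {-1,1}^{2kN} → [-1,1] be identified with its multilinear extension, let μ₀, μ₁ be distributions on ℝ^{2kN} whose moments agree for all index sets of size < 2k or odd block sizes, and satisfy |μ̂₀(I) − μ̂₁(I)| ≤ 2^{-k+1} ε^i N^{-i/2} i! when |I| = 2i. If p ≤ 1/(2N), ε = 1/(60 k² ln N), and P ∈ [-p,p]^{2kN}, then |E_{z∼P·μ₀}[H(z)] − E_{z∼P·μ₁}[H(z)]| ≤ O(2^{-2k} L_{2k}(H) p^{2k} N^{-k/2} + p^{2(k+1)} N^{(k+1)/2}), where L_{2k}(H) = ∑_{|S|=2k} |Ĥ(S)|. -/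
open MeasureTheory ProbabilityTheory
open scoped NNReal ENNReal

/-- The moment of a distribution on `ℝ^{k × M}` indexed by a set of
(block, coordinate) pairs. -/
noncomputable def pairMom {M k : ℕ} (D : Measure (Fin k → Fin M → ℝ))
    (I : Finset (Fin k × Fin M)) : ℝ :=
  ∫ z, ∏ s ∈ I, z s.1 s.2 ∂D

/-!
Expanding `H` in its Fourier basis `c`, the difference of the two expectations is
`∑_S c_S P^S (μ̂₀(S) - μ̂₁(S))`, and only the levels `|S| = 2i ≥ 2k` survive. Level `2k`
gives the `L_{2k}(H)` term, because `ε k ≤ 1/2` makes `ε^k k! ≤ 2^{-k}`. At a level `2i > 2k`,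
Parseval and Cauchy–Schwarz bound `∑_{|S| = 2i} |c_S|` by `√(n choose 2i) ≤ n^i / i!` with
`n = 2kN`, which absorbs the `i!` of the moment bound; since `ε n ≤ N`, these levels are dominated
by a geometric series of ratio `p² √N ≤ 1/4` starting at `(p² √N)^{k+1}`.
-/

open Finset
open scoped Nat

noncomputable def booleanCube (ι : Type*) [Fintype ι] [DecidableEq ι] : Finset (ι → ℝ) :=
  Fintype.piFinset fun _ => {1, -1}

section BooleanCube

variable {ι : Type*} [Fintype ι]

lemma card_booleanCube [DecidableEq ι] : #(booleanCube ι) = 2 ^ Fintype.card ι := by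
  simp [booleanCube, card_pair (by norm_num : (1 : ℝ) ≠ -1)]

lemma sum_booleanCube_prod_mul_prod [DecidableEq ι] (S T : Finset ι) :
    ∑ x ∈ booleanCube ι, (∏ s ∈ S, x s) * ∏ s ∈ T, x s
      = if S = T then 2 ^ Fintype.card ι else 0 := by
  have hcoord (s : ι) : ∑ y ∈ ({1, -1} : Finset ℝ),
      (if s ∈ S then y else 1) * (if s ∈ T then y else 1)
        = if s ∈ S ↔ s ∈ T then 2 else 0 := by
    by_cases hS : s ∈ S <;> by_cases hT : s ∈ T <;> norm_num [hS, hT]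
  simp_rw [← prod_ite_mem_eq S, ← prod_ite_mem_eq T, ← prod_mul_distrib]
  rw [booleanCube,
    sum_prod_piFinset _ fun s y => (if s ∈ S then y else 1) * (if s ∈ T then y else 1)]
  simp_rw [hcoord]
  split_ifs with hST
  · simp [hST]
  · obtain ⟨s, hs⟩ : ∃ s, ¬(s ∈ S ↔ s ∈ T) := by
      by_contra! h
      exact hST (Finset.ext h)
    exact prod_eq_zero (mem_univ s) (if_neg hs)

lemma mem_booleanCube [DecidableEq ι] {x : ι → ℝ} :
    x ∈ booleanCube ι ↔ ∀ i, x i = 1 ∨ x i = -1 := by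
  simp [booleanCube]

theorem sum_sq_le_one_of_abs_le_one [DecidableEq ι] (c : Finset ι → ℝ)
    (hc : ∀ x : ι → ℝ, (∀ i, x i = 1 ∨ x i = -1) → |∑ S, c S * ∏ s ∈ S, x s| ≤ 1) :
    ∑ S, c S ^ 2 ≤ 1 := by
  have hpos : (0 : ℝ) < 2 ^ Fintype.card ι := by positivity
  have hparseval : ∑ x ∈ booleanCube ι, (∑ S, c S * ∏ s ∈ S, x s) ^ 2
      = 2 ^ Fintype.card ι * ∑ S, c S ^ 2 := by
    simp_rw [sq, sum_mul_sum, sum_comm (s := booleanCube ι), mul_mul_mul_comm, ← mul_sum,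
      sum_booleanCube_prod_mul_prod, mul_ite, mul_zero, sum_ite_eq, mem_univ, if_true, mul_sum]
    exact sum_congr rfl fun S _ => by ring
  have hbound : ∑ x ∈ booleanCube ι, (∑ S, c S * ∏ s ∈ S, x s) ^ 2 ≤ 2 ^ Fintype.card ι := by
    calc _ ≤ ∑ _x ∈ booleanCube ι, (1 : ℝ) :=
          sum_le_sum fun x hx => by
            simpa using (sq_le_one_iff_abs_le_one _).2 (hc x (mem_booleanCube.1 hx))
      _ = 2 ^ Fintype.card ι := by simp [card_booleanCube]
  rw [hparseval] at hbound
  exact (mul_le_iff_le_one_right hpos).1 hbound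

lemma sum_abs_le_sqrt_card {c : Finset ι → ℝ} (hc : ∑ S, c S ^ 2 ≤ 1)
    (A : Finset (Finset ι)) : ∑ S ∈ A, |c S| ≤ √(#A) := by
  apply Real.le_sqrt_of_sq_le
  calc (∑ S ∈ A, |c S|) ^ 2 ≤ #A * ∑ S ∈ A, |c S| ^ 2 := sq_sum_le_card_mul_sum_sq
    _ ≤ #A * 1 := by
        gcongr
        simp_rw [sq_abs]
        exact (sum_le_sum_of_subset_of_nonneg (subset_univ A) fun _ _ _ => sq_nonneg _).trans hc
    _ = #A := mul_one _

lemma sum_abs_mul_le_sum_sqrt_choose {c : Finset ι → ℝ} (hc : ∑ S, c S ^ 2 ≤ 1)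
    {a : ℕ → ℝ} (ha : ∀ m, 0 ≤ a m) (A : Finset (Finset ι)) :
    ∑ S ∈ A, |c S| * a #S
      ≤ ∑ m ∈ range (Fintype.card ι + 1), √((Fintype.card ι).choose m) * a m := by
  rw [← sum_fiberwise_of_maps_to (g := card) (t := range (Fintype.card ι + 1))
    fun S _ => mem_range_succ_iff.2 (card_le_univ S)]
  refine sum_le_sum fun m _ => ?_
  calc ∑ S ∈ A with #S = m, |c S| * a #S = (∑ S ∈ A with #S = m, |c S|) * a m := by
        rw [sum_mul]
        exact sum_congr rfl fun S hS => by rw [(mem_filter.1 hS).2]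
    _ ≤ √(#{S ∈ A | #S = m}) * a m := by gcongr; exacts [ha m, sum_abs_le_sqrt_card hc _]
    _ ≤ √((Fintype.card ι).choose m) * a m := by
        gcongr
        · exact ha m
        · rw [← card_univ, ← card_powersetCard]
          exact card_le_card fun S hS => mem_powersetCard.2 ⟨subset_univ S, (mem_filter.1 hS).2⟩

end BooleanCube

lemma sqrt_choose_two_mul_mul_factorial_le (n i : ℕ) :
    √(n.choose (2 * i)) * i ! ≤ (n : ℝ) ^ i := by
  have hnat : n.choose (2 * i) * i ! ^ 2 ≤ n ^ (2 * i) :=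
    calc n.choose (2 * i) * i ! ^ 2 ≤ n.choose (2 * i) * (2 * i)! := by
          gcongr
          rw [sq, two_mul]
          exact Nat.le_of_dvd (Nat.factorial_pos _) (Nat.factorial_mul_factorial_dvd_factorial_add i i)
      _ = n.descFactorial (2 * i) := by rw [Nat.descFactorial_eq_factorial_mul_choose, mul_comm]
      _ ≤ n ^ (2 * i) := Nat.descFactorial_le_pow n (2 * i)
  refine (pow_le_pow_iff_left₀ (by positivity) (by positivity) two_ne_zero).1 ?_
  rw [mul_pow, Real.sq_sqrt (by positivity), ← pow_mul, mul_comm i]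
  exact_mod_cast hnat

noncomputable def momentGap (k : ℕ) (ε N : ℝ) (i : ℕ) : ℝ := 2 / 2 ^ k * ε ^ i * i ! / √N ^ i

noncomputable def momentGapAbove (k : ℕ) (ε N : ℝ) (m : ℕ) : ℝ :=
  if Even m ∧ 2 * k < m then momentGap k ε N (m / 2) else 0

section MomentGap

variable {k : ℕ} {ε N p : ℝ}

lemma momentGapAbove_nonneg (hε : 0 ≤ ε) (m : ℕ) : 0 ≤ momentGapAbove k ε N m := by
  unfold momentGapAbove momentGap
  split_ifs <;> positivity

lemma momentGap_self_le (hε : 0 ≤ ε) (hεk : ε * k ≤ 1 / 2) :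
    momentGap k ε N k ≤ 2 / 2 ^ (2 * k) / √N ^ k := by
  unfold momentGap
  gcongr
  calc 2 / 2 ^ k * ε ^ k * k ! ≤ 2 / 2 ^ k * (ε * k) ^ k := by
        rw [mul_assoc, mul_pow]
        gcongr
        exact_mod_cast Nat.factorial_le_pow k
    _ ≤ 2 / 2 ^ k * (1 / 2) ^ k := by gcongr
    _ = 2 / 2 ^ (2 * k) := by rw [two_mul, pow_add, one_div_pow]; ring

lemma sqrt_choose_mul_momentGap_le {n : ℕ} (hε : 0 ≤ ε) (hN : 0 < N) (hεn : ε * n ≤ N)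
    (i : ℕ) :
    √(n.choose (2 * i)) * (p ^ (2 * i) * momentGap k ε N i)
      ≤ 2 / 2 ^ k * (p ^ 2 * √N) ^ i := by
  have hp : 0 ≤ p ^ (2 * i) := by rw [pow_mul]; positivity
  unfold momentGap
  calc √(n.choose (2 * i)) * (p ^ (2 * i) * (2 / 2 ^ k * ε ^ i * i ! / √N ^ i))
      = (√(n.choose (2 * i)) * i !) * (2 / 2 ^ k * ε ^ i * p ^ (2 * i) / √N ^ i) := by ring
    _ ≤ n ^ i * (2 / 2 ^ k * ε ^ i * p ^ (2 * i) / √N ^ i) :=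
        mul_le_mul_of_nonneg_right (sqrt_choose_two_mul_mul_factorial_le n i) (by positivity)
    _ = 2 / 2 ^ k * (ε * n) ^ i * p ^ (2 * i) / √N ^ i := by ring
    _ ≤ 2 / 2 ^ k * N ^ i * p ^ (2 * i) / √N ^ i := by gcongr
    _ = 2 / 2 ^ k * (p ^ 2 * √N) ^ i := by
        have hsqrt : √N ^ i ≠ 0 := pow_ne_zero i (Real.sqrt_pos.2 hN).ne'
        have hNi : N ^ i = √N ^ i * √N ^ i := by rw [← mul_pow, Real.mul_self_sqrt hN.le]
        rw [hNi, mul_pow, ← pow_mul]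
        field_simp

lemma sum_sqrt_choose_mul_momentGapAbove_le (n : ℕ) (hε : 0 ≤ ε) (hN : 0 < N) (hεn : ε * n ≤ N)
    (hp0 : 0 ≤ p) (hp : p ^ 2 * √N ≤ 1 / 4) :
    ∑ m ∈ range (n + 1), √(n.choose m) * (p ^ m * momentGapAbove k ε N m)
      ≤ 4 * (p ^ (2 * (k + 1)) * √N ^ (k + 1)) := by
  -- `v ^ (2 * i) = (p ^ 2 * √N) ^ i`: powers of `v` sum the even levels as one geometric series.
  set v := p * √(√N)
  have hv0 : 0 ≤ v := by positivity
  have hv_sq : v ^ 2 = p ^ 2 * √N := by rw [mul_pow, Real.sq_sqrt (Real.sqrt_nonneg _)]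
  have hv_half : v ≤ 1 / 2 := by nlinarith
  have hterm (m : ℕ) : √(n.choose m) * (p ^ m * momentGapAbove k ε N m)
      ≤ if 2 * k + 2 ≤ m then 2 / 2 ^ k * v ^ m else 0 := by
    unfold momentGapAbove
    by_cases hm : Even m ∧ 2 * k < m
    · obtain ⟨⟨i, rfl⟩, hlt⟩ := hm
      rw [if_pos ⟨⟨i, rfl⟩, hlt⟩, if_pos (by omega), ← two_mul,
        mul_div_cancel_left₀ i two_ne_zero, pow_mul v, hv_sq]
      exact sqrt_choose_mul_momentGap_le hε hN hεn i
    · rw [if_neg hm, mul_zero, mul_zero]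
      split_ifs <;> positivity
  calc _ ≤ ∑ m ∈ range (n + 1), if 2 * k + 2 ≤ m then 2 / 2 ^ k * v ^ m else 0 :=
        sum_le_sum fun m _ => hterm m
    _ = 2 / 2 ^ k * ∑ m ∈ Ico (2 * k + 2) (n + 1), v ^ m := by
        rw [← sum_filter, range_eq_Ico, Ico_filter_le, mul_sum]
        simp
    _ ≤ 2 / 2 ^ k * (v ^ (2 * k + 2) / (1 - v)) := by
        gcongr
        exact geom_sum_Ico_le_of_lt_one hv0 (by linarith)
    _ ≤ 2 * (2 * v ^ (2 * k + 2)) := by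
        have hfactor : 2 / 2 ^ k ≤ (2 : ℝ) := div_le_self zero_le_two (one_le_pow₀ one_le_two)
        have hgeom : v ^ (2 * k + 2) / (1 - v) ≤ 2 * v ^ (2 * k + 2) := by
          rw [div_le_iff₀ (by linarith)]
          nlinarith [pow_nonneg hv0 (2 * k + 2)]
        exact mul_le_mul hfactor hgeom (div_nonneg (pow_nonneg hv0 _) (by linarith)) zero_le_two
    _ = 4 * (p ^ (2 * (k + 1)) * √N ^ (k + 1)) := by
        rw [show 2 * k + 2 = 2 * (k + 1) by ring, pow_mul, hv_sq, mul_pow, ← pow_mul]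
        ring

end MomentGap

lemma sq_mul_sqrt_le_quarter {N p : ℝ} (hN : 1 ≤ N) (hp0 : 0 ≤ p) (hp : p ≤ 1 / (2 * N)) :
    p ^ 2 * √N ≤ 1 / 4 := by
  have hpN : p * N ≤ 1 / 2 := by
    rw [le_div_iff₀ (by positivity)] at hp
    linarith
  have hsqrt : √N ≤ N ^ 2 := (Real.sqrt_le_self_iff.2 (Or.inr hN)).trans (by nlinarith)
  calc p ^ 2 * √N ≤ p ^ 2 * N ^ 2 := by gcongr
    _ = (p * N) ^ 2 := by ring
    _ ≤ (1 / 2) ^ 2 := by gcongr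
    _ = 1 / 4 := by norm_num

theorem abs_sum_mul_prod_mul_le {ι : Type*} [Fintype ι] (k : ℕ) {ε N p : ℝ}
    {c : Finset ι → ℝ} {P : ι → ℝ} {Δ : Finset ι → ℝ} (hc : ∑ S, c S ^ 2 ≤ 1)
    (hP : ∀ s, |P s| ≤ p) (hΔ_odd : ∀ S, Odd #S → Δ S = 0) (hΔ_low : ∀ S, #S < 2 * k → Δ S = 0)
    (hΔ : ∀ S i, #S = 2 * i → |Δ S| ≤ momentGap k ε N i) (hε : 0 ≤ ε) (hεk : ε * k ≤ 1 / 2)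
    (hεn : ε * Fintype.card ι ≤ N) (hN : 1 ≤ N) (hp0 : 0 ≤ p) (hp : p ≤ 1 / (2 * N)) :
    |∑ S, c S * (∏ s ∈ S, P s) * Δ S|
      ≤ 4 * (1 / 2 ^ (2 * k) * (∑ S with #S = 2 * k, |c S|) * p ^ (2 * k) / √N ^ k
        + p ^ (2 * (k + 1)) * √N ^ (k + 1)) := by
  have hterm (S : Finset ι) : |c S * (∏ s ∈ S, P s) * Δ S| ≤ |c S| * (p ^ #S * |Δ S|) := by
    rw [abs_mul, abs_mul, mul_assoc, abs_prod]
    gcongr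
    exact (prod_le_prod (fun s _ => abs_nonneg _) fun s _ => hP s).trans_eq (prod_const p)
  have hlevel : ∑ S with #S = 2 * k, |c S| * (p ^ #S * |Δ S|)
      ≤ 2 * (1 / 2 ^ (2 * k) * (∑ S with #S = 2 * k, |c S|) * p ^ (2 * k) / √N ^ k) := by
    calc _ ≤ ∑ S with #S = 2 * k, |c S| * (p ^ (2 * k) * (2 / 2 ^ (2 * k) / √N ^ k)) := by
          refine sum_le_sum fun S hS => ?_
          rw [(mem_filter.1 hS).2]
          gcongr
          exact (hΔ S k (mem_filter.1 hS).2).trans (momentGap_self_le hε hεk)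
      _ = _ := by rw [← sum_mul]; ring
  have hΔ_high (S : Finset ι) (hS : #S ≠ 2 * k) :
      |Δ S| ≤ momentGapAbove k ε N #S := by
    unfold momentGapAbove
    split_ifs with h
    · exact hΔ S _ (Nat.two_mul_div_two_of_even h.1).symm
    · rcases Nat.even_or_odd #S with he | ho
      · rw [hΔ_low S (by push Not at h; exact lt_of_le_of_ne (h he) hS), abs_zero]
      · rw [hΔ_odd S ho, abs_zero]
  have habove : ∑ S with #S ≠ 2 * k, |c S| * (p ^ #S * |Δ S|)
      ≤ 4 * (p ^ (2 * (k + 1)) * √N ^ (k + 1)) := by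
    calc _ ≤ ∑ S with #S ≠ 2 * k, |c S| * (p ^ #S * momentGapAbove k ε N #S) := by
          refine sum_le_sum fun S hS => ?_
          gcongr
          exact hΔ_high S (mem_filter.1 hS).2
      _ ≤ _ := sum_abs_mul_le_sum_sqrt_choose hc
            (a := fun m => p ^ m * momentGapAbove k ε N m)
            (fun m => mul_nonneg (pow_nonneg hp0 m) (momentGapAbove_nonneg hε m)) _
      _ ≤ _ := sum_sqrt_choose_mul_momentGapAbove_le _ hε (by linarith) hεn hp0
            (sq_mul_sqrt_le_quarter hN hp0 hp)
  calc _ ≤ ∑ S, |c S| * (p ^ #S * |Δ S|) :=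
        (abs_sum_le_sum_abs _ _).trans (sum_le_sum fun S _ => hterm S)
    _ = _ := (sum_filter_add_sum_filter_not _ (fun S => #S = 2 * k) _).symm
    _ ≤ _ := add_le_add hlevel habove
    _ ≤ _ := by
        have : 0 ≤ 1 / 2 ^ (2 * k) * (∑ S with #S = 2 * k, |c S|) * p ^ (2 * k) / √N ^ k := by
          positivity
        linarith

lemma exists_odd_card_filter_fst {α β : Type*} [Fintype α] [DecidableEq α]
    {S : Finset (α × β)} (h : Odd #S) : ∃ a, Odd #{s ∈ S | s.1 = a} := by
  by_contra! hS
  rw [card_eq_sum_card_fiberwise fun s _ => mem_univ s.1] at h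
  exact Nat.not_odd_iff_even.2 (even_sum _ fun a _ => Nat.not_odd_iff_even.1 (hS a)) h

lemma integral_sum_mul_prod_mul {M k : ℕ} {μ : Measure (Fin k → Fin M → ℝ)}
    (hμ : ∀ I : Finset (Fin k × Fin M), Integrable (fun z => ∏ s ∈ I, z s.1 s.2) μ)
    (c : Finset (Fin k × Fin M) → ℝ) (P : Fin k → Fin M → ℝ) :
    ∫ z, ∑ S, c S * ∏ s ∈ S, P s.1 s.2 * z s.1 s.2 ∂μ
      = ∑ S, c S * (∏ s ∈ S, P s.1 s.2) * pairMom μ S := by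
  simp_rw [prod_mul_distrib, ← mul_assoc]
  rw [integral_finsetSum _ fun S _ => (hμ S).const_mul _]
  exact sum_congr rfl fun S _ => integral_const_mul _ _

/-- Let `H : {-1,1}^{2kN} → [-1,1]` be (the multilinear extension
of) a bounded Boolean function, given by its Fourier coefficients `c`, and let
`μ₀, μ₁` be distributions on `ℝ^{2kN}` whose moments agree for index sets of
size `< 2k` or with a block of odd size, and whose moments at size `2i` differ
by at most `2^{-k+1} ε^i N^{-i/2} i!`.  If `p ≤ 1/(2N)`, `ε = 1/(60 k² ln N)`
and `P ∈ [-p,p]^{2kN}`, then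
`|E_{z∼P·μ₀}[H(z)] − E_{z∼P·μ₁}[H(z)]|
   ≤ O(2^{-2k} L_{2k}(H) p^{2k} N^{-k/2} + p^{2(k+1)} N^{(k+1)/2})`,
with a universal constant. -/
theorem single_step_analysis_around_origin :
    ∃ C : ℝ, 0 < C ∧
      ∀ (N k : ℕ), 2 ≤ N → 1 ≤ k →
      ∀ ε p : ℝ, ε = 1 / (60 * (k : ℝ) ^ 2 * Real.log N) →
        0 ≤ p → p ≤ 1 / (2 * N) →
      ∀ Pv : Fin k → Fin (2 * N) → ℝ, (∀ j i, |Pv j i| ≤ p) →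
      ∀ c : Finset (Fin k × Fin (2 * N)) → ℝ,
        (∀ x : Fin k → Fin (2 * N) → ℝ, (∀ j i, x j i = 1 ∨ x j i = -1) →
          |∑ S : Finset (Fin k × Fin (2 * N)), c S * ∏ s ∈ S, x s.1 s.2| ≤ 1) →
      ∀ μ₀ μ₁ : Measure (Fin k → Fin (2 * N) → ℝ),
        IsProbabilityMeasure μ₀ → IsProbabilityMeasure μ₁ →
        (∀ I : Finset (Fin k × Fin (2 * N)),
          Integrable (fun z : Fin k → Fin (2 * N) → ℝ => ∏ s ∈ I, z s.1 s.2) μ₀ ∧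
          Integrable (fun z : Fin k → Fin (2 * N) → ℝ => ∏ s ∈ I, z s.1 s.2) μ₁) →
        (∀ I : Finset (Fin k × Fin (2 * N)), I.card < 2 * k →
          pairMom μ₀ I = pairMom μ₁ I) →
        (∀ I : Finset (Fin k × Fin (2 * N)),
          (∃ j : Fin k, Odd (I.filter fun s => s.1 = j).card) →
          pairMom μ₀ I = pairMom μ₁ I) →
        (∀ (I : Finset (Fin k × Fin (2 * N))) (i : ℕ), I.card = 2 * i →
          |pairMom μ₀ I - pairMom μ₁ I|
            ≤ (2 / 2 ^ k : ℝ) * ε ^ i * (i.factorial : ℝ) / Real.sqrt N ^ i) →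
        |(∫ z, (∑ S : Finset (Fin k × Fin (2 * N)),
              c S * ∏ s ∈ S, Pv s.1 s.2 * z s.1 s.2) ∂μ₀)
          - ∫ z, (∑ S : Finset (Fin k × Fin (2 * N)),
              c S * ∏ s ∈ S, Pv s.1 s.2 * z s.1 s.2) ∂μ₁|
          ≤ C * ((1 / 2 ^ (2 * k) : ℝ)
                * (∑ S ∈ Finset.univ.filter
                    (fun S : Finset (Fin k × Fin (2 * N)) => S.card = 2 * k),
                    |c S|)
                * p ^ (2 * k) / Real.sqrt N ^ k
              + p ^ (2 * (k + 1)) * Real.sqrt N ^ (k + 1)) := by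
  refine ⟨4, by norm_num, ?_⟩
  intro N k hN hk ε p hε hp0 hpN Pv hPv c hc μ₀ μ₁ _ _ hInt hlow hodd hdiff
  have hN1 : (1 : ℝ) ≤ N := by exact_mod_cast (by omega : 1 ≤ N)
  have hlog : 1 / 2 ≤ Real.log N := by
    have := Real.log_le_log two_pos (show (2 : ℝ) ≤ N by exact_mod_cast hN)
    linarith [Real.log_two_gt_d9]
  have hε0 : 0 ≤ ε := by rw [hε]; positivity
  have hεk : ε * k ≤ 1 / 2 := by
    have hk1 : (1 : ℝ) ≤ k := by exact_mod_cast hk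
    rw [hε, div_mul_eq_mul_div, div_le_div_iff₀ (by positivity) two_pos]
    nlinarith
  rw [integral_sum_mul_prod_mul (fun I => (hInt I).1),
    integral_sum_mul_prod_mul (fun I => (hInt I).2), ← sum_sub_distrib]
  simp_rw [← mul_sub]
  refine abs_sum_mul_prod_mul_le k
    (sum_sq_le_one_of_abs_le_one c fun x hx => hc (fun j i => x (j, i)) fun j i => hx (j, i))
    (fun s => hPv s.1 s.2) (fun S hS => sub_eq_zero.2 (hodd S (exists_odd_card_filter_fst hS)))
    (fun S hS => sub_eq_zero.2 (hlow S hS)) hdiff hε0 hεk ?_ hN1 hp0 hpN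
  rw [Fintype.card_prod, Fintype.card_fin, Fintype.card_fin]
  push_cast
  nlinarith
end
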